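/- arXiv:0809.3303 — 4 statements merged into one kernel-verified Lean document; each statement's English description precedes it below -/
import Mathlib

section
/- The Schur function S_{(g,g-1,...,1)}(T) does not depend on the even-indexed variables T_2, T_4, T_6, ...; that is, its partial derivative with respect to each T_{2i} is zero. -/
open MvPolynomial

lemma my_pderiv_prod {ι : Type*} [DecidableEq ι] (m : ℕ) (s : Finset ι)
    (f : ι → MvPolynomial ℕ ℚ) :
    pderiv m (∏ i ∈ s, f i) = ∑ i ∈ s, pderiv m (f i) * ∏ j ∈ s.erase i, f j := by
  induction s using Finset.induction with
  | empty => simp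
  | @insert a s ha ih =>
    rw [Finset.prod_insert ha, pderiv_mul, ih, Finset.sum_insert ha,
      Finset.erase_insert ha, Finset.mul_sum]
    congr 1
    apply Finset.sum_congr rfl
    intro i hi
    have hia : i ≠ a := by rintro rfl; exact ha hi
    rw [Finset.erase_insert_of_ne hia.symm, Finset.prod_insert (fun h => ha (Finset.mem_of_mem_erase h))]
    ring

lemma my_pderiv_det (m : ℕ) {n : ℕ} (M : Matrix (Fin n) (Fin n) (MvPolynomial ℕ ℚ)) :
    pderiv m M.det = ∑ r : Fin n, (M.updateRow r fun j => pderiv m (M r j)).det := by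
  have hdet : ∀ N : Matrix (Fin n) (Fin n) (MvPolynomial ℕ ℚ),
      N.det = ∑ σ : Equiv.Perm (Fin n), ((Equiv.Perm.sign σ : ℤ) : MvPolynomial ℕ ℚ)
        * ∏ i, N i (σ i) := by
    intro N
    rw [← Matrix.det_transpose, Matrix.det_apply]
    apply Finset.sum_congr rfl
    intro σ _
    rw [Units.smul_def, zsmul_eq_mul]
    rfl
  rw [hdet M, map_sum]
  have key : ∀ σ : Equiv.Perm (Fin n),
      pderiv m (((Equiv.Perm.sign σ : ℤ) : MvPolynomial ℕ ℚ) * ∏ i, M i (σ i)) =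
      ∑ r : Fin n, ((Equiv.Perm.sign σ : ℤ) : MvPolynomial ℕ ℚ)
        * ∏ i, (M.updateRow r fun j => pderiv m (M r j)) i (σ i) := by
    intro σ
    rw [show ((Equiv.Perm.sign σ : ℤ) : MvPolynomial ℕ ℚ) = C ((Equiv.Perm.sign σ : ℤ) : ℚ)
      from (map_intCast (C : ℚ →+* MvPolynomial ℕ ℚ) _).symm, pderiv_C_mul, my_pderiv_prod]
    rw [Finset.mul_sum]
    apply Finset.sum_congr rfl
    intro r _
    congr 1
    rw [← Finset.mul_prod_erase _ _ (Finset.mem_univ r)]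
    congr 1
    · rw [Matrix.updateRow_self]
    · apply Finset.prod_congr rfl
      intro i hi
      rw [Matrix.updateRow_ne (Finset.ne_of_mem_erase hi)]
  calc ∑ σ : Equiv.Perm (Fin n), pderiv m (((Equiv.Perm.sign σ : ℤ) : MvPolynomial ℕ ℚ) * ∏ i, M i (σ i))
      = ∑ σ : Equiv.Perm (Fin n), ∑ r : Fin n, ((Equiv.Perm.sign σ : ℤ) : MvPolynomial ℕ ℚ)
        * ∏ i, (M.updateRow r fun j => pderiv m (M r j)) i (σ i) := by
        exact Finset.sum_congr rfl fun σ _ => key σ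
    _ = ∑ r : Fin n, ∑ σ : Equiv.Perm (Fin n), ((Equiv.Perm.sign σ : ℤ) : MvPolynomial ℕ ℚ)
        * ∏ i, (M.updateRow r fun j => pderiv m (M r j)) i (σ i) := Finset.sum_comm
    _ = _ := by exact Finset.sum_congr rfl fun r _ => (hdet _).symm
lemma my_pderiv_p (p : ℕ → MvPolynomial ℕ ℚ) (h0 : p 0 = 1)
    (hrec : ∀ n : ℕ, ((n : ℚ) + 1) • p (n + 1) =
      ∑ k ∈ Finset.range (n + 1), ((k : ℚ) + 1) • (X (k + 1) * p (n - k)))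
    (q : ℤ → MvPolynomial ℕ ℚ)
    (hq : ∀ m : ℤ, q m = if h : 0 ≤ m then p m.toNat else 0)
    (m : ℕ) (hm : 1 ≤ m) : ∀ n : ℕ, pderiv m (p n) = q ((n : ℤ) - m) := by
  have qnat : ∀ x : ℕ, q (x : ℤ) = p x := by
    intro x; rw [hq, dif_pos (by positivity)]; simp
  have qneg : ∀ z : ℤ, z < 0 → q z = 0 := by
    intro z hz; rw [hq, dif_neg (by omega)]
  intro n
  induction n using Nat.strong_induction_on with
  | _ n ih =>
    match n with
    | 0 =>
      rw [h0, qneg _ (by omega)]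
      simp
    | Nat.succ n =>
      have hne : ((n : ℚ) + 1) ≠ 0 := by positivity
      have cancel : ∀ (a : ℚ) (x y : MvPolynomial ℕ ℚ), a ≠ 0 → a • x = a • y → x = y := by
        intro a x y ha h
        have := congrArg (a⁻¹ • ·) h
        simpa [smul_smul, inv_mul_cancel₀ ha] using this
      refine cancel _ _ _ hne ?_
      have h := congrArg (pderiv m) (hrec n)
      rw [Derivation.map_smul, map_sum] at h
      rw [h]
      -- compute each summand
      have hterm : ∀ k ∈ Finset.range (n + 1),
          pderiv m (((k : ℚ) + 1) • (X (k + 1) * p (n - k))) =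
          ((k : ℚ) + 1) • (pderiv m (X (k + 1)) * p (n - k))
            + ((k : ℚ) + 1) • (X (k + 1) * q (((n - k : ℕ) : ℤ) - m)) := by
        intro k hk
        rw [Derivation.map_smul, pderiv_mul, ih (n - k) (by omega), smul_add]
      rw [Finset.sum_congr rfl hterm, Finset.sum_add_distrib]
      -- the X-derivative sum
      have hA : ∑ k ∈ Finset.range (n + 1), ((k : ℚ) + 1) • (pderiv m (X (k + 1)) * p (n - k))
          = if m ≤ n + 1 then (m : ℚ) • p (n + 1 - m) else 0 := by
        by_cases hmn : m ≤ n + 1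
        · rw [if_pos hmn]
          rw [Finset.sum_eq_single_of_mem (m - 1) (Finset.mem_range.mpr (by omega)) ?_]
          · rw [show m - 1 + 1 = m from by omega, pderiv_X_self, one_mul,
              show n - (m - 1) = n + 1 - m from by omega,
              show ((m - 1 : ℕ) : ℚ) + 1 = (m : ℚ) from by push_cast [Nat.cast_sub hm]; ring]
          · intro k hk hkm
            rw [pderiv_X_of_ne (by omega), zero_mul, smul_zero]
        · rw [if_neg hmn]
          apply Finset.sum_eq_zero
          intro k hk
          rw [pderiv_X_of_ne (by simp at hk; omega), zero_mul, smul_zero]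
      have hB : ∑ k ∈ Finset.range (n + 1), ((k : ℚ) + 1) • (X (k + 1) * q (((n - k : ℕ) : ℤ) - m))
          = if m ≤ n then (((n - m : ℕ) : ℚ) + 1) • p (n - m + 1) else 0 := by
        by_cases hmn : m ≤ n
        · rw [if_pos hmn]
          rw [← Finset.sum_subset (Finset.range_subset_range.mpr (show n - m + 1 ≤ n + 1 by omega))
            (by
              intro k hk hk'
              simp only [Finset.mem_range] at hk hk'
              rw [qneg _ (by omega), mul_zero, smul_zero])]
          rw [hrec (n - m)]
          apply Finset.sum_congr rfl
          intro k hk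
          simp only [Finset.mem_range] at hk
          rw [show ((n - k : ℕ) : ℤ) - (m : ℤ) = ((n - m - k : ℕ) : ℤ) from by omega, qnat]
        · rw [if_neg hmn]
          apply Finset.sum_eq_zero
          intro k hk
          rw [qneg _ (by omega), mul_zero, smul_zero]
      rw [hA, hB]
      rcases lt_trichotomy m (n + 1) with hc | hc | hc
      · have hm1 : m ≤ n := by omega
        rw [if_pos (by omega), if_pos hm1,
          show ((n + 1 : ℕ) : ℤ) - (m : ℤ) = ((n + 1 - m : ℕ) : ℤ) from by omega, qnat,
          show n - m + 1 = n + 1 - m from by omega, ← add_smul]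
        congr 1
        push_cast [Nat.cast_sub hm1]
        ring
      · rw [if_pos (by omega), if_neg (by omega),
          show ((n + 1 : ℕ) : ℤ) - (m : ℤ) = ((0 : ℕ) : ℤ) from by omega, qnat,
          show n + 1 - m = 0 from by omega, add_zero]
        congr 1
        subst hc
        push_cast
        ring
      · rw [if_neg (by omega), if_neg (by omega), qneg _ (by omega), smul_zero, add_zero]

/-- The Schur function of the staircase partition `(g, g-1, ..., 1)` does not
depend on the even-indexed variables `T₂, T₄, ...`: its partial derivative with
respect to each `T_{2i}` (`i ≥ 1`) vanishes.  Here the `p n` are defined by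
`exp (∑ T_n k^n) = ∑ p_n k^n`. -/
theorem schur_staircase_indep_even (g : ℕ) (hg : 1 ≤ g)
    (p : ℕ → MvPolynomial ℕ ℚ)
    (h0 : p 0 = 1)
    (hrec : ∀ n : ℕ, ((n : ℚ) + 1) • p (n + 1) =
      ∑ k ∈ Finset.range (n + 1), ((k : ℚ) + 1) • (X (k + 1) * p (n - k)))
    (q : ℤ → MvPolynomial ℕ ℚ)
    (hq : ∀ m : ℤ, q m = if h : 0 ≤ m then p m.toNat else 0)
    (S : MvPolynomial ℕ ℚ)
    (hS : S = Matrix.det (Matrix.of fun i j : Fin g =>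
      q (((g : ℤ) - (i : ℤ)) - (i : ℤ) + (j : ℤ)))) :
    ∀ i : ℕ, 1 ≤ i → pderiv (2 * i) S = 0 := by
  intro i hi
  have qneg : ∀ z : ℤ, z < 0 → q z = 0 := by
    intro z hz; rw [hq, dif_neg (by omega)]
  set m : ℕ := 2 * i with hmdef
  have hm : 1 ≤ m := by omega
  have qderiv : ∀ z : ℤ, pderiv m (q z) = q (z - m) := by
    intro z
    by_cases hz : 0 ≤ z
    · rw [hq, dif_pos hz, my_pderiv_p p h0 hrec q hq m hm z.toNat,
        show ((z.toNat : ℕ) : ℤ) - (m : ℤ) = z - m from by omega]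
    · rw [hq, dif_neg hz, map_zero, qneg _ (by omega)]
  set M : Matrix (Fin g) (Fin g) (MvPolynomial ℕ ℚ) :=
    Matrix.of fun i j : Fin g => q (((g : ℤ) - (i : ℤ)) - (i : ℤ) + (j : ℤ)) with hM
  rw [hS, my_pderiv_det]
  apply Finset.sum_eq_zero
  intro r _
  by_cases hri : (r : ℕ) + i < g
  · -- the differentiated row coincides with row r + i
    have hne : (⟨(r : ℕ) + i, hri⟩ : Fin g) ≠ r := by
      intro h
      have := congrArg Fin.val h
      simp only at this
      omega
    apply Matrix.det_zero_of_row_eq hne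
    rw [Matrix.updateRow_ne hne, Matrix.updateRow_self]
    funext j
    rw [hM]
    simp only [Matrix.of_apply]
    rw [qderiv]
    congr 1
    push_cast
    omega
  · -- the differentiated row vanishes
    apply Matrix.det_eq_zero_of_row_eq_zero r
    intro j
    rw [Matrix.updateRow_self, hM]
    simp only [Matrix.of_apply]
    rw [qderiv, qneg]
    have hj : (j : ℕ) < g := j.isLt
    have hr : (r : ℕ) < g := r.isLt
    push_cast
    omega
end

section
/- Let V be a 2g-dimensional symplectic vector space with symplectic form omega in Λ²V. The map Λ^{k-2}V → Λ^k V given by wedging with omega is injective for k <= g. Consequently dim W^k = C(2g,k) - C(2g,k-2) for 0 <= k <= g, where W^k = Λ^k V/(omega ∧ Λ^{k-2}V). -/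
/-!
Let `Λ = ∑ᵢ (μᵢ* ⌋ ·) ∘ (εᵢ* ⌋ ·)` be the contraction dual to `L = ω ∧ ·`. The Euler identity
`∑ⱼ eⱼ ∧ (eⱼ* ⌋ x) = k • x` on `Λᵏ V` gives the `sl₂` relation `[Λ, L] = g - k` on `Λᵏ V`, hence
`Λ (ωʳ⁺¹ x) = ωʳ⁺¹ Λx + (r + 1)(g - k - r) ωʳ x`. If `ωʳ⁺¹ x = 0` with `k + r + 1 ≤ g`, then
`ωʳ⁺² Λx = 0`, so `Λx = 0` by induction on the degree, and the nonzero coefficient forces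
`ωʳ x = 0`; descending in `r` gives `x = 0`. The dimension count is then rank–nullity for the
injective map `L : Λᵏ⁻² V → Λᵏ V`.
-/

theorem Submodule.finrank_quotient_comap_subtype_of_le {K V : Type*} [DivisionRing K]
    [AddCommGroup V] [Module K V] {N P : Submodule K V} [FiniteDimensional K P] (h : N ≤ P) :
    Module.finrank K (P ⧸ N.comap P.subtype) = Module.finrank K P - Module.finrank K N := by
  rw [← (Submodule.comapSubtypeEquivOfLe h).finrank_eq,
    ← (N.comap P.subtype).finrank_quotient_add_finrank, Nat.add_sub_cancel]

theorem LinearMap.finrank_map_of_injOn {K V W : Type*} [DivisionRing K] [AddCommGroup V]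
    [Module K V] [AddCommGroup W] [Module K W] {f : V →ₗ[K] W} {p : Submodule K V}
    (hf : Set.InjOn f p) : Module.finrank K (p.map f) = Module.finrank K p :=
  (LinearEquiv.ofBijective (f.submoduleMap p)
    ⟨f.submoduleMap_injective_of_injOn hf, f.submoduleMap_surjective p⟩).finrank_eq.symm

open CliffordAlgebra (contractLeft contractLeft_ι contractLeft_ι_mul contractLeft_algebraMap)

namespace ExteriorAlgebra

variable {R M : Type*} [CommRing R] [AddCommGroup M] [Module R M]

theorem contractLeft_eq_zero_of_mem_exteriorPower_zero (d : Module.Dual R M)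
    {x : ExteriorAlgebra R M} (hx : x ∈ ⋀[R]^0 M) : contractLeft d x = 0 := by
  rw [exteriorPower, pow_zero] at hx
  obtain ⟨r, rfl⟩ := Submodule.mem_one.mp hx
  exact contractLeft_algebraMap _ d r

theorem contractLeft_mem_exteriorPower (d : Module.Dual R M) {k : ℕ}
    {x : ExteriorAlgebra R M} (hx : x ∈ ⋀[R]^(k + 1) M) : contractLeft d x ∈ ⋀[R]^k M := by
  induction k generalizing x with
  | zero =>
    rw [exteriorPower, zero_add, pow_one] at hx
    obtain ⟨v, rfl⟩ := hx
    rw [contractLeft_ι]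
    exact Submodule.algebraMap_mem _
  | succ k ih =>
    rw [exteriorPower, pow_succ'] at hx
    induction hx using Submodule.mul_induction_on' with
    | mem_mul_mem _ hu y hy =>
      obtain ⟨u, rfl⟩ := hu
      rw [contractLeft_ι_mul]
      refine sub_mem (Submodule.smul_mem _ _ hy) ?_
      rw [exteriorPower, pow_succ']
      exact Submodule.mul_mem_mul ⟨u, rfl⟩ (ih hy)
    | add _ _ _ _ hx hy => exact map_add (contractLeft d) _ _ ▸ add_mem hx hy

theorem sum_ι_mul_contractLeft_coord {I : Type*} [Fintype I] (b : Module.Basis I R M) {k : ℕ}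
    {x : ExteriorAlgebra R M} (hx : x ∈ ⋀[R]^k M) :
    ∑ i, ι R (b i) * contractLeft (b.coord i) x = (k : R) • x := by
  induction hx using Submodule.pow_induction_on_left' with
  | algebraMap r => simp [contractLeft_algebraMap]
  | add x y i _ _ hx hy => simp only [map_add, mul_add, Finset.sum_add_distrib, hx, hy, smul_add]
  | mem_mul _ hu i x _ ih =>
    obtain ⟨u, rfl⟩ := hu
    have hterm : ∀ j, ι R (b j) * contractLeft (b.coord j) (ι R u * x)
        = b.coord j u • (ι R (b j) * x) + ι R u * (ι R (b j) * contractLeft (b.coord j) x) := by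
      intro j
      rw [contractLeft_ι_mul, mul_sub, mul_smul_comm, ← mul_assoc, ← mul_assoc,
        eq_neg_of_add_eq_zero_left (ι_add_mul_swap (b j) u), neg_mul, sub_neg_eq_add]
    calc ∑ j, ι R (b j) * contractLeft (b.coord j) (ι R u * x)
        = ι R (∑ j, b.coord j u • b j) * x
            + ι R u * ∑ j, ι R (b j) * contractLeft (b.coord j) x := by
          simp only [hterm, Finset.sum_add_distrib, Finset.mul_sum, map_sum, Finset.sum_mul,
            map_smul, smul_mul_assoc]
      _ = ((i.succ : ℕ) : R) • (ι R u * x) := by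
          simp only [Module.Basis.coord_apply, b.sum_repr, ih, mul_smul_comm, Nat.succ_eq_add_one,
            Nat.cast_succ, add_smul, one_smul, add_comm]

theorem contractLeft_ι_mul_ι_mul_of_eq_zero {d : Module.Dual R M} {u w : M} (hu : d u = 0)
    (hw : d w = 0) (x : ExteriorAlgebra R M) :
    contractLeft d (ι R u * ι R w * x) = ι R u * ι R w * contractLeft d x := by
  rw [mul_assoc, contractLeft_ι_mul, contractLeft_ι_mul, hu, hw, zero_smul, zero_smul,
    zero_sub, zero_sub, mul_neg, neg_neg, mul_assoc]

theorem contractLeft_contractLeft_ι_mul_ι_mul {α β : Module.Dual R M} {u w : M}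
    (hαu : α u = 1) (hαw : α w = 0) (hβu : β u = 0) (hβw : β w = 1) (x : ExteriorAlgebra R M) :
    contractLeft β (contractLeft α (ι R u * ι R w * x))
      = ι R u * ι R w * contractLeft β (contractLeft α x)
        + (x - ι R u * contractLeft α x - ι R w * contractLeft β x) := by
  simp only [mul_assoc, contractLeft_ι_mul, map_sub, hαu, hαw, hβu, hβw, one_smul, zero_smul,
    zero_sub, map_neg, mul_neg, mul_sub]
  abel

section Symplectic

variable {I : Type*} [Fintype I] (e : Module.Basis (I ⊕ I) R M)

noncomputable def symplecticForm : ExteriorAlgebra R M :=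
  ∑ i, ι R (e (.inl i)) * ι R (e (.inr i))

noncomputable def dualLefschetz : ExteriorAlgebra R M →ₗ[R] ExteriorAlgebra R M :=
  ∑ i, contractLeft (e.coord (.inr i)) ∘ₗ contractLeft (e.coord (.inl i))

variable {e}

theorem dualLefschetz_apply (x : ExteriorAlgebra R M) :
    dualLefschetz e x
      = ∑ i, contractLeft (e.coord (.inr i)) (contractLeft (e.coord (.inl i)) x) := by
  simp only [dualLefschetz, LinearMap.coe_sum, Finset.sum_apply, LinearMap.comp_apply]

theorem symplecticForm_mem_exteriorPower_two : symplecticForm e ∈ ⋀[R]^2 M := by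
  rw [exteriorPower, pow_two]
  exact Submodule.sum_mem _ fun _ _ => Submodule.mul_mem_mul ⟨_, rfl⟩ ⟨_, rfl⟩

theorem symplecticForm_pow_mul_mem_exteriorPower {m : ℕ} {x : ExteriorAlgebra R M}
    (hx : x ∈ ⋀[R]^m M) (r : ℕ) : symplecticForm e ^ r * x ∈ ⋀[R]^(2 * r + m) M := by
  rw [exteriorPower, pow_add, pow_mul]
  exact Submodule.mul_mem_mul (Submodule.pow_mem_pow _ symplecticForm_mem_exteriorPower_two r) hx

theorem dualLefschetz_mem_exteriorPower {k : ℕ} {x : ExteriorAlgebra R M}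
    (hx : x ∈ ⋀[R]^(k + 2) M) : dualLefschetz e x ∈ ⋀[R]^k M := by
  rw [dualLefschetz_apply]
  exact Submodule.sum_mem _ fun _ _ =>
    contractLeft_mem_exteriorPower _ (contractLeft_mem_exteriorPower _ hx)

theorem dualLefschetz_eq_zero_of_lt_two {k : ℕ} {x : ExteriorAlgebra R M}
    (hx : x ∈ ⋀[R]^k M) (hk : k < 2) : dualLefschetz e x = 0 := by
  rw [dualLefschetz_apply]
  refine Finset.sum_eq_zero fun _ _ => ?_
  interval_cases k
  · rw [contractLeft_eq_zero_of_mem_exteriorPower_zero _ hx, map_zero]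
  · exact contractLeft_eq_zero_of_mem_exteriorPower_zero _ (contractLeft_mem_exteriorPower _ hx)

theorem dualLefschetz_symplecticForm_mul {k : ℕ} {x : ExteriorAlgebra R M}
    (hx : x ∈ ⋀[R]^k M) :
    dualLefschetz e (symplecticForm e * x)
      = symplecticForm e * dualLefschetz e x + ((Fintype.card I : R) - k) • x := by
  classical
  set a : I → ExteriorAlgebra R M := fun i => ι R (e (.inl i))
  set b : I → ExteriorAlgebra R M := fun i => ι R (e (.inr i))
  set α : I → Module.Dual R M := fun i => e.coord (.inl i)
  set β : I → Module.Dual R M := fun i => e.coord (.inr i)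
  have hpair : ∀ i j, contractLeft (β i) (contractLeft (α i) (a j * b j * x))
      = a j * b j * contractLeft (β i) (contractLeft (α i) x)
        + if j = i then x - a i * contractLeft (α i) x - b i * contractLeft (β i) x else 0 := by
    intro i j
    split_ifs with h
    · subst h
      exact contractLeft_contractLeft_ι_mul_ι_mul (by simp [α]) (by simp [α]) (by simp [β])
        (by simp [β]) x
    · rw [add_zero, contractLeft_ι_mul_ι_mul_of_eq_zero, contractLeft_ι_mul_ι_mul_of_eq_zero] <;>
        simp [α, β, h]
  have heuler := sum_ι_mul_contractLeft_coord e hx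
  rw [Fintype.sum_sum_type] at heuler
  calc dualLefschetz e (symplecticForm e * x)
      = ∑ i, ∑ j, contractLeft (β i) (contractLeft (α i) (a j * b j * x)) := by
        simp only [dualLefschetz_apply, symplecticForm, Finset.sum_mul, map_sum]
        exact Finset.sum_comm
    _ = ∑ i, (symplecticForm e * contractLeft (β i) (contractLeft (α i) x)
          + (x - a i * contractLeft (α i) x - b i * contractLeft (β i) x)) := by
        simp only [hpair, Finset.sum_add_distrib, Finset.sum_ite_eq', Finset.mem_univ, if_true,
          symplecticForm, Finset.sum_mul]
        rfl
    _ = symplecticForm e * dualLefschetz e x + (Fintype.card I • x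
          - (∑ i, a i * contractLeft (α i) x + ∑ i, b i * contractLeft (β i) x)) := by
        simp only [Finset.sum_add_distrib, Finset.sum_sub_distrib, Finset.mul_sum,
          dualLefschetz_apply, Finset.sum_const, Finset.card_univ]
        abel
    _ = symplecticForm e * dualLefschetz e x + ((Fintype.card I : R) - k) • x := by
        rw [heuler, sub_smul, Nat.cast_smul_eq_nsmul R (Fintype.card I)]

theorem dualLefschetz_symplecticForm_pow_succ_mul {m : ℕ} {x : ExteriorAlgebra R M}
    (hx : x ∈ ⋀[R]^m M) (r : ℕ) :
    dualLefschetz e (symplecticForm e ^ (r + 1) * x)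
      = symplecticForm e ^ (r + 1) * dualLefschetz e x
        + (((r : R) + 1) * ((Fintype.card I : R) - m - r)) • (symplecticForm e ^ r * x) := by
  induction r with
  | zero => simpa using dualLefschetz_symplecticForm_mul hx
  | succ r ih =>
    rw [pow_succ', mul_assoc,
      dualLefschetz_symplecticForm_mul (symplecticForm_pow_mul_mem_exteriorPower hx (r + 1)), ih,
      mul_add, ← mul_assoc, ← pow_succ', mul_smul_comm, ← mul_assoc, ← pow_succ', add_assoc,
      ← add_smul]
    congr 2
    push_cast
    ring

end Symplectic

section Field

variable {K M : Type*} [Field K] [CharZero K] [AddCommGroup M] [Module K M]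
  {I : Type*} [Fintype I] {e : Module.Basis (I ⊕ I) K M}

theorem eq_zero_of_symplecticForm_pow_mul_eq_zero {m r : ℕ} {x : ExteriorAlgebra K M}
    (hx : x ∈ ⋀[K]^m M) (hmr : m + r ≤ Fintype.card I) (h : symplecticForm e ^ r * x = 0) :
    x = 0 := by
  induction m using Nat.strong_induction_on generalizing r x with
  | _ m ihm =>
    induction r with
    | zero => simpa using h
    | succ r ihr =>
      have hcomm := dualLefschetz_symplecticForm_pow_succ_mul (e := e) hx r
      rw [h, map_zero] at hcomm
      have hΛ : dualLefschetz e x = 0 := by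
        rcases lt_or_ge m 2 with hm | hm
        · exact dualLefschetz_eq_zero_of_lt_two hx hm
        obtain ⟨m, rfl⟩ := Nat.exists_eq_add_of_le' hm
        refine ihm m (by omega) (dualLefschetz_mem_exteriorPower hx) (r := r + 2) (by omega) ?_
        have := congrArg (symplecticForm e * ·) hcomm
        simpa only [mul_zero, mul_add, ← mul_assoc, ← pow_succ', mul_smul_comm, h, smul_zero,
          add_zero, eq_comm] using this
      rw [hΛ, mul_zero, zero_add, eq_comm, smul_eq_zero] at hcomm
      have hcoef : ((r : K) + 1) * ((Fintype.card I : K) - m - r) ≠ 0 := by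
        refine mul_ne_zero (Nat.cast_add_one_ne_zero r) ?_
        rw [sub_sub, sub_ne_zero]
        exact_mod_cast (by omega : Fintype.card I ≠ m + r)
      exact ihr (by omega) (hcomm.resolve_left hcoef)

theorem injOn_symplecticForm_mul {m : ℕ} (hm : m + 1 ≤ Fintype.card I) :
    Set.InjOn (symplecticForm e * ·) (⋀[K]^m M : Set (ExteriorAlgebra K M)) :=
  LinearMap.disjoint_ker_iff_injOn (f := LinearMap.mulLeft K (symplecticForm e)).mp <|
    Submodule.disjoint_def.mpr fun x hx hx0 =>
      eq_zero_of_symplecticForm_pow_mul_eq_zero hx hm (by rwa [pow_one])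

end Field

end ExteriorAlgebra

open ExteriorAlgebra

/-- For a `2g`-dimensional symplectic vector space `V` with
`ω = ∑ εᵢ ∧ μᵢ`, wedging with `ω` is injective from `Λ^{k-2}V` to `Λ^kV`
for `k ≤ g`, and consequently `dim W^k = C(2g,k) - C(2g,k-2)` for `k ≤ g`,
where `W^k = Λ^kV / (ω ∧ Λ^{k-2}V)`.  Here `ΛV` is realized as the exterior
algebra, `Λ^kV = (range ι)^k`, and for `k < 2` the space `Λ^{k-2}V` is read
as the zero space (so that the binomial `C(2g,k-2)` term is absent). -/
theorem omega_wedge_injective_and_dim_Wk (g : ℕ)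
    (ι : (Fin (g + g) → ℂ) →ₗ[ℂ] ExteriorAlgebra ℂ (Fin (g + g) → ℂ))
    (hι : ι = ExteriorAlgebra.ι ℂ)
    (ω : ExteriorAlgebra ℂ (Fin (g + g) → ℂ))
    (hω : ω = ∑ i : Fin g,
      ι (Pi.single (Fin.castAdd g i) 1) * ι (Pi.single (Fin.natAdd g i) 1))
    (Lam : ℕ → Submodule ℂ (ExteriorAlgebra ℂ (Fin (g + g) → ℂ)))
    (hLam : ∀ k, Lam k = (LinearMap.range ι) ^ k)
    (Lam' : ℕ → Submodule ℂ (ExteriorAlgebra ℂ (Fin (g + g) → ℂ)))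
    (hLam' : ∀ k, Lam' k = if 2 ≤ k then Lam (k - 2) else ⊥)
    (k : ℕ) (hk : k ≤ g) :
    Set.InjOn (fun x => ω * x) (Lam' k : Set (ExteriorAlgebra ℂ (Fin (g + g) → ℂ))) ∧
    Module.finrank ℂ ((Lam k) ⧸ Submodule.comap (Lam k).subtype
        (Submodule.map (LinearMap.mulLeft ℂ ω) (Lam' k)))
      = Nat.choose (2 * g) k - (if 2 ≤ k then Nat.choose (2 * g) (k - 2) else 0) := by
  subst hι
  obtain rfl : Lam = fun k => ⋀[ℂ]^k (Fin (g + g) → ℂ) := funext hLam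
  have hωe :
      ω = symplecticForm ((Pi.basisFun ℂ (Fin (g + g))).reindex finSumFinEquiv.symm) := by
    simp [hω, symplecticForm]
  have hinj :
      Set.InjOn (fun x => ω * x) (Lam' k : Set (ExteriorAlgebra ℂ (Fin (g + g) → ℂ))) := by
    rw [hLam', hωe]
    split_ifs with h2
    · exact injOn_symplecticForm_mul (by simp; omega)
    · simp
  have hmap : (Lam' k).map (LinearMap.mulLeft ℂ ω) ≤ ⋀[ℂ]^k (Fin (g + g) → ℂ) := by
    rw [hLam', Submodule.map_le_iff_le_comap]
    split_ifs with h2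
    · intro x hx
      have := Submodule.mul_mem_mul (hωe ▸ symplecticForm_mem_exteriorPower_two) hx
      rwa [← pow_add, Nat.add_sub_cancel' h2] at this
    · exact bot_le
  refine ⟨hinj, ?_⟩
  rw [Submodule.finrank_quotient_comap_subtype_of_le hmap,
    LinearMap.finrank_map_of_injOn (f := LinearMap.mulLeft ℂ ω) hinj, exteriorPower.finrank_eq,
    Module.finrank_fin_fun, two_mul, hLam']
  by_cases h2 : 2 ≤ k
  · rw [if_pos h2, if_pos h2, exteriorPower.finrank_eq, Module.finrank_fin_fun]
  · rw [if_neg h2, if_neg h2, finrank_bot]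
end

section
/- The formal power series identity holds: -q - q^3 - q^5 + (1 + q^12 + q^14 + q^16 + q^18)/((1-q)(1-q^3)(1-q^5)) + (q^8 + q^10 + q^12)/((1-q)(1-q^3)) = ([1/2]_{q^2} [7]_{q^2}!) / ([3]_{q^2}! [4]_{q^2}! [3+1/2]_{q^2}!), where [n]_p = 1 - p^n, [n]_p! = prod_{i=1}^n [i]_p, and [n+1/2]_p! = prod_{i=0}^n [i+1/2]_p. -/
lemma one_sub_X_pow_ne_zero (n : ℕ) (hn : 0 < n) :
    (1 - (RatFunc.X : RatFunc ℚ) ^ n) ≠ 0 := by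
  intro h0
  have hx : (RatFunc.X : RatFunc ℚ) ^ n = 1 := by linear_combination -h0
  have hP : (Polynomial.X : Polynomial ℚ) ^ n = 1 := by
    apply RatFunc.algebraMap_injective ℚ ?_
    · simpa using hx
  have := congrArg Polynomial.natDegree hP
  simp [Polynomial.natDegree_X_pow] at this
  omega

/-- The rational-function identity for the character of `gr^{KP} A` for `g = 3`:
`-q - q³ - q⁵ + (1+q¹²+q¹⁴+q¹⁶+q¹⁸)/((1-q)(1-q³)(1-q⁵)) + (q⁸+q¹⁰+q¹²)/((1-q)(1-q³))`
equals `[1/2]_{q²}[7]_{q²}! / ([3]_{q²}![4]_{q²}![3+1/2]_{q²}!)`, where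
`[n]_p = 1 - pⁿ`, `[n]_p! = ∏_{i=1}^n [i]_p`, `[1/2]_{q²} = 1 - q` and
`[n+1/2]_{q²}! = ∏_{i=0}^n (1 - q^{2i+1})`. -/
theorem character_identity_g3 (q : RatFunc ℚ) (hq : q = RatFunc.X) :
    -q - q ^ 3 - q ^ 5
      + (1 + q ^ 12 + q ^ 14 + q ^ 16 + q ^ 18)
          / ((1 - q) * (1 - q ^ 3) * (1 - q ^ 5))
      + (q ^ 8 + q ^ 10 + q ^ 12) / ((1 - q) * (1 - q ^ 3))
    = ((1 - q) * ∏ i ∈ Finset.Icc 1 7, (1 - q ^ (2 * i)))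
        / ((∏ i ∈ Finset.Icc 1 3, (1 - q ^ (2 * i)))
          * (∏ i ∈ Finset.Icc 1 4, (1 - q ^ (2 * i)))
          * (∏ i ∈ Finset.range 4, (1 - q ^ (2 * i + 1)))) := by
  subst hq
  have h : ∀ n : ℕ, 0 < n → (1 - (RatFunc.X : RatFunc ℚ) ^ n) ≠ 0 :=
    one_sub_X_pow_ne_zero
  have h1 := h 1 (by norm_num)
  have h2 := h 2 (by norm_num)
  have h3 := h 3 (by norm_num)
  have h4 := h 4 (by norm_num)
  have h5 := h 5 (by norm_num)
  have h6 := h 6 (by norm_num)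
  have h7 := h 7 (by norm_num)
  have h8 := h 8 (by norm_num)
  have h10 := h 10 (by norm_num)
  have h12 := h 12 (by norm_num)
  have h14 := h 14 (by norm_num)
  simp only [Finset.prod_Icc_succ_top (by norm_num : (1:ℕ) ≤ 2),
    Finset.prod_Icc_succ_top (by norm_num : (1:ℕ) ≤ 3),
    Finset.prod_Icc_succ_top (by norm_num : (1:ℕ) ≤ 4),
    Finset.prod_Icc_succ_top (by norm_num : (1:ℕ) ≤ 5),
    Finset.prod_Icc_succ_top (by norm_num : (1:ℕ) ≤ 6),
    Finset.prod_Icc_succ_top (by norm_num : (1:ℕ) ≤ 7),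
    Finset.prod_range_succ, Finset.prod_range_zero, Finset.Icc_self,
    Finset.prod_singleton, one_mul]
  norm_num
  have hD1 : (1 - (RatFunc.X : RatFunc ℚ)) * (1 - RatFunc.X ^ 3) * (1 - RatFunc.X ^ 5) ≠ 0 :=
    mul_ne_zero (mul_ne_zero (by simpa using h1) h3) h5
  have hD2 : (1 - (RatFunc.X : RatFunc ℚ)) * (1 - RatFunc.X ^ 3) ≠ 0 :=
    mul_ne_zero (by simpa using h1) h3
  rw [add_div' _ _ _ hD1, div_add_div _ _ hD1 hD2, div_eq_div_iff (mul_ne_zero hD1 hD2) ?_]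
  · ring
  · exact mul_ne_zero (mul_ne_zero
      (mul_ne_zero (mul_ne_zero h2 h4) h6)
      (mul_ne_zero (mul_ne_zero (mul_ne_zero h2 h4) h6) h8))
      (mul_ne_zero (mul_ne_zero (mul_ne_zero (by simpa using h1) h3) h5) h7)
end

section
/- In C^3 with sigma = z_1^2 + z_2^2 + z_3^2 and phi²_n as above, for each i one has z_i * phi²_n = (1/(2(1-n))) * d( (z_{i+2} dz_{i+1} - z_{i+1} dz_{i+2}) / sigma^{n-1} ) for n >= 2, where indices are taken mod 3. -/
/-!
The 1-form is `(z ⨯₃ eᵢ) · dz / σ^(n-1)`, so its differential is given by a curl. Since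
`curl (z ⨯₃ a) = -2a`, `∇(σ^(-q)) = -2q σ^(-q-1) z` and `z ⨯₃ (z ⨯₃ a) = (z ⬝ᵥ a) z - σ a`,
`curl ((z ⨯₃ a) / σ^q) = -2a/σ^q - 2q ((z ⬝ᵥ a) z - σ a)/σ^(q+1)`. For `a = eᵢ` and `q = n - 1`
the only term of pole order `n` is `2(1-n) zᵢ z / σⁿ`; the rest is a constant multiple of
`eᵢ / σ^(n-1)`.
-/

open scoped Matrix

section
variable {𝕜 ι : Type*} [NontriviallyNormedField 𝕜] [Fintype ι]

theorem hasFDerivAt_sum_sq (z : ι → 𝕜) :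
    HasFDerivAt (fun w : ι → 𝕜 => ∑ l, w l ^ 2)
      (∑ l, (2 * z l) • ContinuousLinearMap.proj (R := 𝕜) (φ := fun _ : ι => 𝕜) l) z :=
  HasFDerivAt.fun_sum fun l _ => by
    have hl : HasFDerivAt (fun w : ι → 𝕜 => w l) (ContinuousLinearMap.proj l) z :=
      hasFDerivAt_apply (𝕜 := 𝕜) l z
    simpa [Function.comp_def] using (hasDerivAt_pow 2 (z l)).comp_hasFDerivAt z hl

theorem fderiv_div_sum_sq_pow_apply (L : (ι → 𝕜) →L[𝕜] 𝕜) (q : ℕ) {z : ι → 𝕜}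
    (hz : ∑ l, z l ^ 2 ≠ 0) (v : ι → 𝕜) :
    fderiv 𝕜 (fun w => L w / (∑ l, w l ^ 2) ^ q) z v
      = L v / (∑ l, z l ^ 2) ^ q
        - 2 * q * L z * (z ⬝ᵥ v) / (∑ l, z l ^ 2) ^ (q + 1) := by
  have hinv : HasFDerivAt (fun w => ((∑ l, w l ^ 2) ^ q)⁻¹) _ z :=
    (hasDerivAt_inv (pow_ne_zero q hz)).comp_hasFDerivAt z ((hasFDerivAt_sum_sq z).pow q)
  have hσv : ∑ l, 2 * z l * v l = 2 * (z ⬝ᵥ v) := by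
    simp only [dotProduct, Finset.mul_sum, mul_assoc]
  simp only [div_eq_mul_inv]
  rw [(L.hasFDerivAt.fun_mul hinv).fderiv]
  simp only [add_apply, smul_apply, sum_apply, ContinuousLinearMap.proj_apply, smul_eq_mul, hσv]
  obtain _ | p := q
  · simp
  · simp only [Nat.add_sub_cancel]
    field_simp
    push_cast
    ring
end

section
variable {R : Type*} [CommRing R]

theorem ite_eq_cross_single_apply (i k : Fin 3) (w : Fin 3 → R) :
    (if k = i + 1 then w (i + 2) else if k = i + 2 then -w (i + 1) else 0)
      = (w ⨯₃ Pi.single i 1) k := by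
  fin_cases i <;> fin_cases k <;> simp [cross_apply]

theorem single_cross_apply_sub_single_cross_apply (a : Fin 3 → R) (j : Fin 3) :
    (Pi.single (j + 1) 1 ⨯₃ a) (j + 2) - (Pi.single (j + 2) 1 ⨯₃ a) (j + 1) = -2 * a j := by
  fin_cases j <;> simp [cross_apply] <;> ring

theorem cross_apply_mul_sub_cross_apply_mul (a z : Fin 3 → R) (j : Fin 3) :
    (z ⨯₃ a) (j + 2) * z (j + 1) - (z ⨯₃ a) (j + 1) * z (j + 2)
      = (z ⬝ᵥ a) * z j - (∑ l, z l ^ 2) * a j := by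
  fin_cases j <;> simp [cross_apply, Matrix.vec3_dotProduct, Fin.sum_univ_three] <;> ring
end

section
variable {𝕜 : Type*} [NontriviallyNormedField 𝕜]

/-- The `dz_{j+1} ∧ dz_{j+2}` coefficient of `d(∑ₖ F_k dz_k)`. -/
noncomputable def curl (F : (Fin 3 → 𝕜) → Fin 3 → 𝕜) (z : Fin 3 → 𝕜) (j : Fin 3) : 𝕜 :=
  fderiv 𝕜 (fun w => F w (j + 2)) z (Pi.single (j + 1) 1)
    - fderiv 𝕜 (fun w => F w (j + 1)) z (Pi.single (j + 2) 1)

variable [CompleteSpace 𝕜]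

theorem fderiv_cross_apply_div_sum_sq_pow_apply (a : Fin 3 → 𝕜) (k : Fin 3) (q : ℕ)
    {z : Fin 3 → 𝕜} (hz : ∑ l, z l ^ 2 ≠ 0) (v : Fin 3 → 𝕜) :
    fderiv 𝕜 (fun w => (w ⨯₃ a) k / (∑ l, w l ^ 2) ^ q) z v
      = (v ⨯₃ a) k / (∑ l, z l ^ 2) ^ q
        - 2 * q * (z ⨯₃ a) k * (z ⬝ᵥ v) / (∑ l, z l ^ 2) ^ (q + 1) :=
  fderiv_div_sum_sq_pow_apply (LinearMap.proj k ∘ₗ crossProduct.flip a).toContinuousLinearMap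
    q hz v

theorem curl_cross_div_sum_sq_pow (a : Fin 3 → 𝕜) (q : ℕ) {z : Fin 3 → 𝕜}
    (hz : ∑ l, z l ^ 2 ≠ 0) (j : Fin 3) :
    curl (fun w k => (w ⨯₃ a) k / (∑ l, w l ^ 2) ^ q) z j
      = -2 * a j / (∑ l, z l ^ 2) ^ q
        - 2 * q * ((z ⬝ᵥ a) * z j - (∑ l, z l ^ 2) * a j) / (∑ l, z l ^ 2) ^ (q + 1) := by
  rw [curl, fderiv_cross_apply_div_sum_sq_pow_apply a _ q hz,
    fderiv_cross_apply_div_sum_sq_pow_apply a _ q hz, dotProduct_single_one,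
    dotProduct_single_one, ← single_cross_apply_sub_single_cross_apply a j,
    ← cross_apply_mul_sub_cross_apply_mul a z j]
  ring
end

/-- Componentwise: the `dz_{j+1} ∧ dz_{j+2}` coefficients agree up to a term `c / σ^(n-1)`,
i.e. in the graded piece `gr_n Ω²`. -/
theorem z_phi2_is_exact_in_graded (n : ℕ) (hn : 2 ≤ n) (i : Fin 3)
    (B : Fin 3 → (Fin 3 → ℂ) → ℂ)
    (hB : ∀ k w, B k w =
      (if k = i + 1 then w (i + 2) else if k = i + 2 then -(w (i + 1)) else 0)
        / (∑ j : Fin 3, w j ^ 2) ^ (n - 1)) :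
    ∀ j : Fin 3, ∃ c : ℂ, ∀ z : Fin 3 → ℂ, (∑ l : Fin 3, z l ^ 2) ≠ 0 →
      z i * z j / (∑ l : Fin 3, z l ^ 2) ^ n
        = (1 / (2 * (1 - (n : ℂ)))) *
            (fderiv ℂ (B (j + 2)) z (Pi.single (j + 1) 1)
              - fderiv ℂ (B (j + 1)) z (Pi.single (j + 2) 1))
          + c / (∑ l : Fin 3, z l ^ 2) ^ (n - 1) := by
  obtain ⟨q, rfl⟩ : ∃ q, n = q + 1 := ⟨n - 1, by omega⟩
  have hq : (q : ℂ) ≠ 0 := by exact_mod_cast (by omega : q ≠ 0)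
  have hB_cross : (fun w k => B k w)
      = fun w k => (w ⨯₃ Pi.single i 1) k / (∑ l, w l ^ 2) ^ q := by
    funext w k
    rw [hB, ite_eq_cross_single_apply, Nat.add_sub_cancel]
  intro j
  refine ⟨(1 - 1 / q) * Pi.single (M := fun _ => ℂ) i 1 j, fun z hz => ?_⟩
  change _ = _ * curl (fun w k => B k w) z j + _
  rw [hB_cross, curl_cross_div_sum_sq_pow _ q hz, dotProduct_single_one, Nat.add_sub_cancel]
  push_cast
  rw [show (1 : ℂ) - (q + 1) = -q by ring]
  field_simp
  ring
end
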